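/- For positive definite matrices A and B, the Wasserstein mean A◇B := ¼[A + B + (AB)^{1/2} + (BA)^{1/2}] is positive definite, and it equals |½A^{1/2} + ½U*B^{1/2}|² where U is the unitary from the polar decomposition B^{1/2}A^{1/2} = U(A^{1/2}BA^{1/2})^{1/2}. -/

import Mathlib

open Matrix Filter Asymptotics
open scoped ComplexOrder

/-- The PSD square root of a matrix (0 if not PSD). -/
noncomputable def msqrt {n : ℕ} (M : Matrix (Fin n) (Fin n) ℂ) : Matrix (Fin n) (Fin n) ℂ :=
  letI := Classical.propDecidable M.PosSemidef
  if h : M.PosSemidef then (h.1.eigenvectorUnitary : Matrix (Fin n) (Fin n) ℂ) *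
    diagonal ((↑) ∘ Real.sqrt ∘ h.1.eigenvalues) * (star h.1.eigenvectorUnitary : Matrix (Fin n) (Fin n) ℂ) else 0

/-- `(AB)^{1/2} := A^{1/2} (A^{1/2} B A^{1/2})^{1/2} A^{-1/2}`. -/
noncomputable def sqAB {n : ℕ} (A B : Matrix (Fin n) (Fin n) ℂ) : Matrix (Fin n) (Fin n) ℂ :=
  msqrt A * msqrt (msqrt A * B * msqrt A) * (msqrt A)⁻¹

/-- Bures-Wasserstein geodesic `A ◇_t B`. -/
noncomputable def geo {n : ℕ} (A B : Matrix (Fin n) (Fin n) ℂ) (t : ℝ) : Matrix (Fin n) (Fin n) ℂ :=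
  ((1 - t)^2 : ℝ) • A + (t^2 : ℝ) • B + (t * (1 - t) : ℝ) • (sqAB A B + (sqAB A B)ᴴ)

/-- Bures-Wasserstein distance. -/
noncomputable def dBW {n : ℕ} (A B : Matrix (Fin n) (Fin n) ℂ) : ℝ :=
  Real.sqrt ((Matrix.trace A).re + (Matrix.trace B).re -
    2 * (Matrix.trace (msqrt (msqrt A * B * msqrt A))).re)

/-! With `a = A^{1/2}`, `b = B^{1/2}` and `M = (A^{1/2} B A^{1/2})^{1/2}`, the polar decomposition
gives `M = U* b a`, hence `(AB)^{1/2} = a M a⁻¹ = a U* b`. Expanding `Y = a + U* b` then yields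
`Y* Y = A + B + (AB)^{1/2} + (BA)^{1/2}`. Positive definiteness follows because `Y` is
invertible: `Y a = A + M` is positive definite. -/

open scoped MatrixOrder

section MatrixSqrt

variable {n : ℕ}

theorem msqrt_eq_cfcSqrt (M : Matrix (Fin n) (Fin n) ℂ) : msqrt M = CFC.sqrt M := by
  by_cases hM : M.PosSemidef
  · rw [msqrt, dif_pos hM, CFC.sqrt_eq_real_sqrt M hM.nonneg, cfcₙ_eq_cfc, hM.1.cfc_eq,
      IsHermitian.cfc, Unitary.conjStarAlgAut_apply]
    rfl
  · rw [msqrt, dif_neg hM, CFC.sqrt, cfcₙ_apply_of_not_predicate]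
    rwa [Matrix.nonneg_iff_posSemidef]

theorem posSemidef_msqrt (M : Matrix (Fin n) (Fin n) ℂ) : (msqrt M).PosSemidef := by
  rw [msqrt_eq_cfcSqrt, ← Matrix.nonneg_iff_posSemidef]
  exact CFC.sqrt_nonneg M

theorem msqrt_mul_msqrt {M : Matrix (Fin n) (Fin n) ℂ} (hM : M.PosSemidef) :
    msqrt M * msqrt M = M := by
  rw [msqrt_eq_cfcSqrt, CFC.sqrt_mul_sqrt_self M hM.nonneg]

theorem isUnit_msqrt {M : Matrix (Fin n) (Fin n) ℂ} (hM : M.PosDef) : IsUnit (msqrt M) :=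
  isUnit_of_mul_isUnit_left ((msqrt_mul_msqrt hM.posSemidef).symm ▸ hM.isUnit)

end MatrixSqrt

theorem star_add_star_mul_mul_self {R : Type*} [Ring R] [StarRing R] {a b u : R}
    (ha : IsSelfAdjoint a) (hb : IsSelfAdjoint b) (hu : u * star u = 1) :
    star (a + star u * b) * (a + star u * b) =
      a * a + b * b + a * star u * b + star (a * star u * b) := by
  have hbub : b * u * (star u * b) = b * b := by
    rw [mul_assoc, ← mul_assoc u, hu, one_mul]
  simp only [star_add, star_mul, star_star, ha.star_eq, hb.star_eq, add_mul, mul_add, hbub,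
    mul_assoc]
  abel

section Polar

variable {n : ℕ} {A B U : Matrix (Fin n) (Fin n) ℂ}

theorem sqAB_eq_of_polar (hA : A.PosDef) (hU : Uᴴ * U = 1)
    (hpolar : msqrt B * msqrt A = U * msqrt (msqrt A * B * msqrt A)) :
    sqAB A B = msqrt A * Uᴴ * msqrt B := by
  have hM : msqrt (msqrt A * B * msqrt A) = Uᴴ * msqrt B * msqrt A := by
    rw [mul_assoc Uᴴ, hpolar, ← mul_assoc, hU, one_mul]
  rw [sqAB, hM, ← mul_assoc, mul_assoc _ (msqrt A),
    mul_nonsing_inv _ ((isUnit_msqrt hA).map detMonoidHom), mul_one, mul_assoc]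

theorem isUnit_msqrt_add_of_polar (hA : A.PosDef) (hU : Uᴴ * U = 1)
    (hpolar : msqrt B * msqrt A = U * msqrt (msqrt A * B * msqrt A)) :
    IsUnit (msqrt A + Uᴴ * msqrt B) := by
  have h : (msqrt A + Uᴴ * msqrt B) * msqrt A = A + msqrt (msqrt A * B * msqrt A) := by
    rw [add_mul, msqrt_mul_msqrt hA.posSemidef, mul_assoc, hpolar, ← mul_assoc, hU, one_mul]
  exact isUnit_of_mul_isUnit_left (h ▸ (hA.add_posSemidef (posSemidef_msqrt _)).isUnit)

end Polar

theorem stmt16 {n : ℕ} (A B U : Matrix (Fin n) (Fin n) ℂ)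
    (hA : A.PosDef) (hB : B.PosDef) (hU : U ∈ Matrix.unitaryGroup (Fin n) ℂ)
    (hpolar : msqrt B * msqrt A = U * msqrt (msqrt A * B * msqrt A)) :
    ((1 / 4 : ℝ) • (A + B + sqAB A B + (sqAB A B)ᴴ)).PosDef ∧
    (1 / 4 : ℝ) • (A + B + sqAB A B + (sqAB A B)ᴴ) =
      ((1 / 2 : ℝ) • msqrt A + (1 / 2 : ℝ) • (Uᴴ * msqrt B))ᴴ *
        ((1 / 2 : ℝ) • msqrt A + (1 / 2 : ℝ) • (Uᴴ * msqrt B)) := by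
  set Y := msqrt A + Uᴴ * msqrt B
  have hsum : A + B + sqAB A B + (sqAB A B)ᴴ = Yᴴ * Y := by
    have h := star_add_star_mul_mul_self (posSemidef_msqrt A).1.isSelfAdjoint
      (posSemidef_msqrt B).1.isSelfAdjoint hU.2
    rw [msqrt_mul_msqrt hA.posSemidef, msqrt_mul_msqrt hB.posSemidef] at h
    rw [sqAB_eq_of_polar hA hU.1 hpolar]
    exact h.symm
  have hYunit : IsUnit Y := isUnit_msqrt_add_of_polar hA hU.1 hpolar
  have hhalf : (1 / 2 : ℝ) • msqrt A + (1 / 2 : ℝ) • (Uᴴ * msqrt B) = (1 / 2 : ℝ) • Y :=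
    (smul_add _ _ _).symm
  refine ⟨?_, ?_⟩
  · rw [hsum]
    exact (PosDef.conjTranspose_mul_self Y (mulVec_injective_of_isUnit hYunit)).smul
      (by norm_num)
  · rw [hhalf, hsum, conjTranspose_smul, smul_mul_smul_comm]
    norm_num
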